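/- arXiv:1408.4490 — 4 statements merged into one kernel-verified Lean document; each statement's English description precedes it below -/
import Mathlib

section
/- Sub-path optimality fails for the stochastic on-time arrival problem: there exists a stochastic network, a source s, destination d, and budget T such that the most reliable s–d path within budget T passes through an intermediate node v via a sub-path that is strictly dominated (has strictly lower reliability from s to v) at every feasible intermediate budget by another s–v path. -/
open Finset

/-- PMF of edge e1 : P(X=2)=0.9, P(X=3)=0.1. -/
noncomputable def pmfE1 : ℕ → ℝ := fun t => if t = 2 then 0.9 else if t = 3 then 0.1 else 0
/-- PMF of edge e2 : P(X=1)=0.5, P(X=2)=0.3, P(X=3)=0.1, P(X=4)=0.1. -/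
noncomputable def pmfE2 : ℕ → ℝ := fun t =>
  if t = 1 then 0.5 else if t = 2 then 0.3 else if t = 3 then 0.1 else if t = 4 then 0.1 else 0
/-- PMF of edge e3 : P(X=1)=0.6, P(X=4)=0.4. -/
noncomputable def pmfE3 : ℕ → ℝ := fun t => if t = 1 then 0.6 else if t = 4 then 0.4 else 0
/-- PMF of edge e4 : P(X=2)=0.5, P(X=3)=0.5. -/
noncomputable def pmfE4 : ℕ → ℝ := fun t => if t = 2 then 0.5 else if t = 3 then 0.5 else 0

/-- CDF of a PMF. -/
noncomputable def cdfOf (p : ℕ → ℝ) (t : ℕ) : ℝ := ∑ τ ∈ range (t + 1), p τ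

/-- Reliability of the two-edge path (e, e4) from v1 to v3 with budget 4:
`P(X_e + X_{e4} ≤ 4)` for independent edge travel times. -/
noncomputable def relWithE4 (p : ℕ → ℝ) : ℝ := ∑ t ∈ range 5, p t * cdfOf pmfE4 (4 - t)

/-! With budget 4 and `e4` taking 2 or 3 with equal probability, the path through `e` arrives in time
iff `X_e ≤ 1`, or `X_e = 2` and `X_{e4} = 2`; so its reliability is the mean of the CDF of `e` at
budgets 1 and 2. That mean is 0.65 for `e2` against 0.45 for `e1` and 0.6 for `e3`, although `e3`
beats `e2` at budget 1 and `e1` beats it at budgets 2 and 3. -/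

theorem relWithE4_eq_avg_cdfOf (p : ℕ → ℝ) : relWithE4 p = (cdfOf p 1 + cdfOf p 2) / 2 := by
  norm_num [relWithE4, cdfOf, pmfE4, sum_range_succ]
  ring

theorem cdfOf_pmfE1_values : cdfOf pmfE1 1 = 0 ∧ cdfOf pmfE1 2 = 0.9 ∧ cdfOf pmfE1 3 = 1 := by
  norm_num [cdfOf, pmfE1, sum_range_succ]

theorem cdfOf_pmfE2_values : cdfOf pmfE2 1 = 0.5 ∧ cdfOf pmfE2 2 = 0.8 ∧ cdfOf pmfE2 3 = 0.9 := by
  norm_num [cdfOf, pmfE2, sum_range_succ]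

theorem cdfOf_pmfE3_values : cdfOf pmfE3 1 = 0.6 ∧ cdfOf pmfE3 2 = 0.6 ∧ cdfOf pmfE3 3 = 0.6 := by
  norm_num [cdfOf, pmfE3, sum_range_succ]

/-- Sub-path optimality fails for the SOTA problem.  In the network
v1 →(e1,e2,e3)→ v2 →(e4)→ v3 with the given travel-time distributions and budget
T = 4, the path (e2,e4) is strictly more reliable than both (e1,e4) and (e3,e4),
even though the sub-path e2 (from v1 to v2) is strictly dominated at every feasible
intermediate budget t ∈ {1,2,3} by another v1–v2 path (namely e1 or e3). -/
theorem sota_subpath_optimality_fails :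
    relWithE4 pmfE1 < relWithE4 pmfE2 ∧
    relWithE4 pmfE3 < relWithE4 pmfE2 ∧
    ∀ t ∈ Finset.Icc 1 3, cdfOf pmfE2 t < max (cdfOf pmfE1 t) (cdfOf pmfE3 t) := by
  obtain ⟨h11, h12, h13⟩ := cdfOf_pmfE1_values
  obtain ⟨h21, h22, h23⟩ := cdfOf_pmfE2_values
  obtain ⟨h31, h32, h33⟩ := cdfOf_pmfE3_values
  refine ⟨?_, ?_, fun t ht => ?_⟩
  · rw [relWithE4_eq_avg_cdfOf, relWithE4_eq_avg_cdfOf, h11, h12, h21, h22]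
    norm_num
  · rw [relWithE4_eq_avg_cdfOf, relWithE4_eq_avg_cdfOf, h31, h32, h21, h22]
    norm_num
  · obtain ⟨ht₁, ht₃⟩ := Finset.mem_Icc.mp ht
    interval_cases t
    · rw [h21, h11, h31]; norm_num
    · rw [h22, h12, h32]; norm_num
    · rw [h23, h13, h33]; norm_num
end

section
/- Arc-Potential pruning is sound: if φ_{ij} is defined as the minimum time budget t for which edge (i,j) is realizable under the optimal policy toward some destination in region D (i.e., there is positive probability of traversing (i,j) when following the optimal policy from the source with budget t), then for any query with budget T < φ_{ij}, removing edge (i,j) from the graph does not change the optimal policy value u_s(T) or the optimal path. -/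
/-!
Deleting an edge can only shrink the maxima in the Bellman recursion, so `u' ≤ u` by strong
induction on the budget. Conversely, at every state reachable from `(s, T)` along `w` the
policy's choice survives the pruning, and every successor carrying positive probability is again
reachable; the same induction, run only over reachable states, gives `u ≤ u'` there.
-/

open Finset
open scoped NNReal

/-- One step of a positive-probability trajectory that follows the policy `w`. -/
def PolicyStep {V : Type*} (p : V → V → ℕ → ℝ≥0) (w : V → ℕ → V) :
    V × ℕ → V × ℕ → Prop :=
  fun a b => b.1 = w a.1 a.2 ∧ b.2 < a.2 ∧ 0 < p a.1 b.1 (a.2 - b.2)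

/-- Edge `(a,b)` is realizable under the optimal policy `w` when starting from `s`
with budget `T`: some positive-probability trajectory following `w` reaches `a`
with a remaining budget `t` at which the policy chooses `b`. -/
def EdgeRealizable {V : Type*} (p : V → V → ℕ → ℝ≥0) (w : V → ℕ → V)
    (s : V) (T : ℕ) (a b : V) : Prop :=
  ∃ t : ℕ, Relation.ReflTransGen (PolicyStep p w) (s, T) (a, t) ∧ w a t = b

section

variable {V : Type*}

def edgeValue (p : V → V → ℕ → ℝ≥0) (δ : V → V → ℕ) (v : V → ℕ → ℝ≥0) (i j : V) (t : ℕ) :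
    ℝ≥0 :=
  ∑ τ ∈ Icc (δ i j) t, p i j τ * v j (t - τ)

def eraseEdge [DecidableEq V] (N : V → Finset V) (a b : V) : V → Finset V :=
  fun i => if i = a then (N a).erase b else N i

theorem eraseEdge_subset [DecidableEq V] (N : V → Finset V) (a b i : V) :
    eraseEdge N a b i ⊆ N i := by
  unfold eraseEdge
  split_ifs with h
  · subst h; exact erase_subset b (N i)
  · exact Subset.refl _

theorem mem_eraseEdge [DecidableEq V] {N : V → Finset V} {a b i j : V} (hj : j ∈ N i)
    (hab : i = a → j ≠ b) : j ∈ eraseEdge N a b i := by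
  unfold eraseEdge
  split_ifs with h
  · subst h; exact mem_erase.2 ⟨hab rfl, hj⟩
  · exact hj

theorem sub_lt_self_of_mem_Icc {δ τ t : ℕ} (hδ : 1 ≤ δ) (hτ : τ ∈ Icc δ t) : t - τ < t := by
  rw [mem_Icc] at hτ
  omega

theorem edgeValue_mono {p : V → V → ℕ → ℝ≥0} {δ : V → V → ℕ} {v v' : V → ℕ → ℝ≥0} {i j : V}
    {t : ℕ} (h : ∀ τ ∈ Icc (δ i j) t, 0 < p i j τ → v j (t - τ) ≤ v' j (t - τ)) :
    edgeValue p δ v i j t ≤ edgeValue p δ v' i j t := by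
  refine sum_le_sum fun τ hτ => ?_
  rcases eq_zero_or_pos (p i j τ) with hp | hp
  · simp [hp]
  · exact mul_le_mul_right (h τ hτ hp) _

theorem policyStep_of_mem_Icc {p : V → V → ℕ → ℝ≥0} {δ : V → V → ℕ} {w : V → ℕ → V}
    {i : V} {t τ : ℕ} (hδ : 1 ≤ δ i (w i t)) (hτ : τ ∈ Icc (δ i (w i t)) t)
    (hp : 0 < p i (w i t) τ) : PolicyStep p w (i, t) (w i t, t - τ) := by
  have hτt : t - (t - τ) = τ := Nat.sub_sub_self (mem_Icc.1 hτ).2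
  exact ⟨rfl, sub_lt_self_of_mem_Icc hδ hτ, by rwa [hτt]⟩

variable {p : V → V → ℕ → ℝ≥0} {δ : V → V → ℕ} {d : V} {u u' : V → ℕ → ℝ≥0}

theorem le_of_bellman_of_subset {N N' : V → Finset V} (hN : ∀ i, N' i ⊆ N i)
    (hδ : ∀ i j, 1 ≤ δ i j) (hd : ∀ t, u' d t ≤ u d t)
    (hu : ∀ i, i ≠ d → ∀ t, (N i).sup (fun j => edgeValue p δ u i j t) ≤ u i t)
    (hu' : ∀ i, i ≠ d → ∀ t, u' i t ≤ (N' i).sup (fun j => edgeValue p δ u' i j t))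
    (t : ℕ) (i : V) : u' i t ≤ u i t := by
  induction t using Nat.strong_induction_on generalizing i with
  | _ t ih =>
    by_cases hid : i = d
    · exact hid ▸ hd t
    refine (hu' i hid t).trans <| (Finset.sup_le fun j hj => ?_).trans (hu i hid t)
    refine (edgeValue_mono fun τ hτ _ => ih _ (sub_lt_self_of_mem_Icc (hδ i j) hτ) j).trans ?_
    exact le_sup (f := fun j => edgeValue p δ u i j t) (hN i hj)

theorem le_of_bellman_of_reachable {N' : V → Finset V} {w : V → ℕ → V} {s : V} {T : ℕ}
    (hδ : ∀ i j, 1 ≤ δ i j) (hd : ∀ t, u d t ≤ u' d t)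
    (hw : ∀ i, i ≠ d → ∀ t, u i t ≤ edgeValue p δ u i (w i t) t)
    (hu' : ∀ i, i ≠ d → ∀ t, (N' i).sup (fun j => edgeValue p δ u' i j t) ≤ u' i t)
    (hw_mem : ∀ i t, Relation.ReflTransGen (PolicyStep p w) (s, T) (i, t) → i ≠ d →
      w i t ∈ N' i)
    (t : ℕ) (i : V) (hreach : Relation.ReflTransGen (PolicyStep p w) (s, T) (i, t)) :
    u i t ≤ u' i t := by
  induction t using Nat.strong_induction_on generalizing i with
  | _ t ih =>
    by_cases hid : i = d
    · exact hid ▸ hd t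
    refine (hw i hid t).trans <| (edgeValue_mono fun τ hτ hp => ?_).trans <|
      (le_sup (f := fun j => edgeValue p δ u' i j t) (hw_mem i t hreach hid)).trans (hu' i hid t)
    exact ih _ (sub_lt_self_of_mem_Icc (hδ i _) hτ) _
      (hreach.tail (policyStep_of_mem_Icc (hδ i _) hτ hp))

end

theorem arc_potential_pruning_sound_general
    {V : Type*} [DecidableEq V]
    (neighbors : V → Finset V) (d : V)
    (p : V → V → ℕ → ℝ≥0) (δ : V → V → ℕ)
    (u u' : V → ℕ → ℝ≥0) (w : V → ℕ → V)
    (s a b : V) (T : ℕ)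
    (hδ_one : ∀ i j, 1 ≤ δ i j)
    -- `u` is the Bellman value on the full graph
    (hu_dest : ∀ t, u d t = 1)
    (hu_rec : ∀ i, i ≠ d → ∀ t,
      u i t = (neighbors i).sup
        (fun j => ∑ τ ∈ Finset.Icc (δ i j) t, p i j τ * u j (t - τ)))
    -- `w` is an optimal policy attaining `u`
    (hw_mem : ∀ i, i ≠ d → ∀ t, w i t ∈ neighbors i)
    (hw_opt : ∀ i, i ≠ d → ∀ t,
      u i t = ∑ τ ∈ Finset.Icc (δ i (w i t)) t, p i (w i t) τ * u (w i t) (t - τ))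
    -- `u'` is the Bellman value on the graph with edge `(a,b)` removed
    (hu'_dest : ∀ t, u' d t = 1)
    (hu'_rec : ∀ i, i ≠ d → ∀ t,
      u' i t = ((if i = a then (neighbors a).erase b else neighbors i)).sup
        (fun j => ∑ τ ∈ Finset.Icc (δ i j) t, p i j τ * u' j (t - τ)))
    -- the edge `(a,b)` is never realizable from `(s,T)` under the optimal policy
    (hnr : ¬ EdgeRealizable p w s T a b) :
    u' s T = u s T := by
  have hw_pruned : ∀ i t, Relation.ReflTransGen (PolicyStep p w) (s, T) (i, t) → i ≠ d →
      w i t ∈ eraseEdge neighbors a b i := fun i t hreach hid =>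
    mem_eraseEdge (hw_mem i hid t) fun hia hb => hnr ⟨t, hia ▸ hreach, hia ▸ hb⟩
  refine le_antisymm ?_ ?_
  · exact le_of_bellman_of_subset (N' := eraseEdge neighbors a b) (eraseEdge_subset neighbors a b)
      hδ_one (fun t => by rw [hu_dest, hu'_dest]) (fun i hi t => (hu_rec i hi t).ge)
      (fun i hi t => (hu'_rec i hi t).le) T s
  · exact le_of_bellman_of_reachable hδ_one (fun t => by rw [hu_dest, hu'_dest])
      (fun i hi t => (hw_opt i hi t).le) (fun i hi t => (hu'_rec i hi t).ge) hw_pruned T s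
      Relation.ReflTransGen.refl

/-- Soundness of Arc-Potential pruning.  Let `u` be the Bellman value
on the full graph, `w` an optimal policy attaining it, and suppose the arc
potential of edge `(a,b)` exceeds the query budget `T`, i.e. `(a,b)` is not
realizable under the optimal policy from `s` for budget `T` (this holds whenever
`T < φ_{ab}`).  Then the Bellman value `u'` computed on the graph with edge `(a,b)`
removed satisfies `u'_s(T) = u_s(T)`: pruning the edge does not change the optimal
policy value. -/
theorem arc_potential_pruning_sound
    {V : Type*} [Fintype V] [DecidableEq V]
    (neighbors : V → Finset V) (d : V)
    (p : V → V → ℕ → ℝ≥0) (δ : V → V → ℕ)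
    (u u' : V → ℕ → ℝ≥0) (w : V → ℕ → V)
    (s a b : V) (T : ℕ)
    (hp_mass : ∀ i j n, ∑ τ ∈ Finset.range n, p i j τ ≤ 1)
    (hδ_one : ∀ i j, 1 ≤ δ i j)
    (hp_supp : ∀ i j τ, τ < δ i j → p i j τ = 0)
    -- `u` is the Bellman value on the full graph
    (hu_dest : ∀ t, u d t = 1)
    (hu_rec : ∀ i, i ≠ d → ∀ t,
      u i t = (neighbors i).sup
        (fun j => ∑ τ ∈ Finset.Icc (δ i j) t, p i j τ * u j (t - τ)))
    -- `w` is an optimal policy attaining `u`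
    (hw_mem : ∀ i, i ≠ d → ∀ t, w i t ∈ neighbors i)
    (hw_opt : ∀ i, i ≠ d → ∀ t,
      u i t = ∑ τ ∈ Finset.Icc (δ i (w i t)) t, p i (w i t) τ * u (w i t) (t - τ))
    -- `u'` is the Bellman value on the graph with edge `(a,b)` removed
    (hu'_dest : ∀ t, u' d t = 1)
    (hu'_rec : ∀ i, i ≠ d → ∀ t,
      u' i t = ((if i = a then (neighbors a).erase b else neighbors i)).sup
        (fun j => ∑ τ ∈ Finset.Icc (δ i j) t, p i j τ * u' j (t - τ)))
    -- the edge `(a,b)` is never realizable from `(s,T)` under the optimal policy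
    (hnr : ¬ EdgeRealizable p w s T a b) :
    u' s T = u s T :=
  arc_potential_pruning_sound_general neighbors d p δ u u' w s a b T hδ_one hu_dest hu_rec hw_mem
    hw_opt hu'_dest hu'_rec hnr
end

section
/- The mixed reliability of a path prefix ending at node i, r^P_{si}(T) = Σ_{t=0}^{T} q^P_{si}(t) u_i(T−t), upper-bounds the reliability of every completion of P to the destination: for any path P' from i to d, Σ_{t=0}^T q^{P∥P'}_{sd}(t) ≤ r^P_{si}(T) (discrete-time version). -/
open Finset
open scoped NNReal

/-- Discrete convolution of two PMFs on ℕ. -/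
noncomputable def dconv (f g : ℕ → ℝ≥0) : ℕ → ℝ≥0 :=
  fun t => ∑ τ ∈ Finset.range (t + 1), f τ * g (t - τ)

/-- Discrete travel-time PMF of a path given as a nonempty list of edges. -/
noncomputable def dPathPMF {V : Type*} (p : V → V → ℕ → ℝ≥0)
    (e : V × V) (es : List (V × V)) : ℕ → ℝ≥0 :=
  es.foldl (fun f e' => dconv f (p e'.1 e'.2)) (p e.1 e.2)

/-!
Write `F f (T) = ∑_{t ≤ T} f t` for cumulative distributions; `F f = f ∗ 1`. By associativity of
convolution, `F (q^P ∗ q^{P'}) = q^P ∗ F q^{P'}`, while the mixed reliability is `(q^P ∗ u_i)(T)`.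
Convolution with a nonnegative sequence is monotone, so it suffices that `F q^{P'} ≤ u_i`. This
holds for every path to `d`, by induction from its last edge: admissibility of `u` says that
convolving `p_{ab}` with anything below `u_b` stays below `u_a`, and the induction starts from
`F q^{(a,d)} = p_{ad} ∗ 1` with `1 = u_d`.
-/

noncomputable def dcdf (f : ℕ → ℝ≥0) (T : ℕ) : ℝ≥0 :=
  ∑ t ∈ range (T + 1), f t

theorem powerSeries_mk_dconv (f g : ℕ → ℝ≥0) :
    PowerSeries.mk (dconv f g) = PowerSeries.mk f * PowerSeries.mk g := by
  ext t
  rw [PowerSeries.coeff_mk, PowerSeries.coeff_mul,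
    Finset.Nat.sum_antidiagonal_eq_sum_range_succ_mk]
  simp only [dconv, PowerSeries.coeff_mk, Nat.succ_eq_add_one]

theorem dconv_assoc (f g h : ℕ → ℝ≥0) :
    dconv (dconv f g) h = dconv f (dconv g h) := by
  have hmk : PowerSeries.mk (dconv (dconv f g) h) = PowerSeries.mk (dconv f (dconv g h)) := by
    simp only [powerSeries_mk_dconv, mul_assoc]
  funext t
  simpa only [PowerSeries.coeff_mk] using congrArg (PowerSeries.coeff t) hmk

theorem dcdf_eq_dconv_one (f : ℕ → ℝ≥0) : dcdf f = dconv f 1 := by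
  funext T
  simp only [dcdf, dconv, Pi.one_apply, mul_one]

theorem dcdf_dconv (f g : ℕ → ℝ≥0) : dcdf (dconv f g) = dconv f (dcdf g) := by
  rw [dcdf_eq_dconv_one, dcdf_eq_dconv_one, dconv_assoc]

theorem dconv_mono_right (f : ℕ → ℝ≥0) {g g' : ℕ → ℝ≥0} (hg : g ≤ g') :
    dconv f g ≤ dconv f g' := fun t => by
  unfold dconv
  gcongr with τ
  exact hg _

theorem foldl_dconv_cons {V : Type*} (p : V → V → ℕ → ℝ≥0) (l : List (V × V))
    (f : ℕ → ℝ≥0) (e : V × V) :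
    (e :: l).foldl (fun g x => dconv g (p x.1 x.2)) f = dconv f (dPathPMF p e l) := by
  induction l generalizing f e with
  | nil => rfl
  | cons x l ih =>
    change (x :: l).foldl _ (dconv f (p e.1 e.2)) = dconv f ((x :: l).foldl _ (p e.1 e.2))
    rw [ih, ih, dconv_assoc]

theorem dPathPMF_cons {V : Type*} (p : V → V → ℕ → ℝ≥0) (e x : V × V) (l : List (V × V)) :
    dPathPMF p e (x :: l) = dconv (p e.1 e.2) (dPathPMF p x l) :=
  foldl_dconv_cons p l _ x

theorem dPathPMF_append {V : Type*} (p : V → V → ℕ → ℝ≥0)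
    (e : V × V) (es : List (V × V)) (e' : V × V) (es' : List (V × V)) :
    dPathPMF p e (es ++ e' :: es') = dconv (dPathPMF p e es) (dPathPMF p e' es') := by
  rw [dPathPMF, List.foldl_append]
  exact foldl_dconv_cons p es' _ e'

theorem dconv_eq_sum_Icc {f : ℕ → ℝ≥0} {δ : ℕ} (hf : ∀ τ < δ, f τ = 0) (g : ℕ → ℝ≥0)
    (t : ℕ) : dconv f g t = ∑ τ ∈ Icc δ t, f τ * g (t - τ) := by
  refine (sum_subset (fun τ hτ => ?_) fun τ hτt hτ => ?_).symm
  · exact mem_range.mpr (Nat.lt_succ_of_le (mem_Icc.mp hτ).2)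
  · have hτδ : τ < δ := by
      simp only [mem_range, mem_Icc, not_and, not_le] at hτt hτ
      omega
    rw [hf τ hτδ, zero_mul]

section Admissible

variable {V : Type*} (E : V → V → Prop) (p : V → V → ℕ → ℝ≥0) (δ : V → V → ℕ)
  (u : V → ℕ → ℝ≥0)

theorem dconv_le_of_admissible
    (hp_supp : ∀ a b τ, τ < δ a b → p a b τ = 0)
    (hu_adm : ∀ a b, E a b → ∀ t,
      (∑ τ ∈ Finset.Icc (δ a b) t, p a b τ * u b (t - τ)) ≤ u a t)
    {a b : V} (hab : E a b) {g : ℕ → ℝ≥0} (hg : g ≤ u b) : dconv (p a b) g ≤ u a := by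
  intro t
  calc dconv (p a b) g t
      ≤ dconv (p a b) (u b) t := dconv_mono_right _ hg t
    _ = ∑ τ ∈ Icc (δ a b) t, p a b τ * u b (t - τ) := dconv_eq_sum_Icc (hp_supp a b) _ t
    _ ≤ u a t := hu_adm a b hab t

theorem dcdf_dPathPMF_le_of_admissible (d : V)
    (hp_supp : ∀ a b τ, τ < δ a b → p a b τ = 0)
    (hu_dest : ∀ t, u d t = 1)
    (hu_adm : ∀ a b, E a b → ∀ t,
      (∑ τ ∈ Finset.Icc (δ a b) t, p a b τ * u b (t - τ)) ≤ u a t)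
    (e : V × V) (es : List (V × V))
    (hend : ((e :: es).getLast (List.cons_ne_nil e es)).2 = d)
    (hchain : List.IsChain (fun a b => a.2 = b.1) (e :: es))
    (hedges : ∀ x ∈ e :: es, E x.1 x.2) :
    dcdf (dPathPMF p e es) ≤ u e.1 := by
  have he : E e.1 e.2 := hedges e List.mem_cons_self
  induction es generalizing e with
  | nil =>
    rw [dPathPMF, List.foldl_nil, dcdf_eq_dconv_one]
    exact dconv_le_of_admissible E p δ u hp_supp hu_adm he
      fun t => by rw [show e.2 = d from hend, hu_dest, Pi.one_apply]
  | cons x es ih =>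
    obtain ⟨hlink, hchain⟩ := List.isChain_cons_cons.mp hchain
    have hx := ih x hend hchain (fun y hy => hedges y (List.mem_cons_of_mem _ hy))
      (hedges x (List.mem_cons_of_mem _ List.mem_cons_self))
    rw [dPathPMF_cons, dcdf_dconv]
    exact dconv_le_of_admissible E p δ u hp_supp hu_adm he (hlink ▸ hx)

end Admissible

theorem mixed_reliability_bounds_all_completions_general
    {V : Type*}
    (E : V → V → Prop)
    (p : V → V → ℕ → ℝ≥0) (δ : V → V → ℕ)
    (u : V → ℕ → ℝ≥0)
    (i d : V) (T : ℕ)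
    (hp_supp : ∀ a b τ, τ < δ a b → p a b τ = 0)
    (hu_dest : ∀ t, u d t = 1)
    (hu_adm : ∀ a b, E a b → ∀ t,
      (∑ τ ∈ Finset.Icc (δ a b) t, p a b τ * u b (t - τ)) ≤ u a t)
    -- the prefix path `P = e :: es` runs from `s` to `i`
    (e : V × V) (es : List (V × V))
    -- the completion `P' = e' :: es'` runs from `i` to `d`
    (e' : V × V) (es' : List (V × V))
    (hstart' : e'.1 = i)
    (hend' : ((e' :: es').getLast (List.cons_ne_nil e' es')).2 = d)
    (hchain' : List.Chain' (fun a b => a.2 = b.1) (e' :: es'))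
    (hedges' : ∀ x ∈ e' :: es', E x.1 x.2) :
    (∑ t ∈ Finset.range (T + 1), dPathPMF p e (es ++ e' :: es') t) ≤
      ∑ t ∈ Finset.range (T + 1), dPathPMF p e es t * u i (T - t) := by
  have hcompletion : dcdf (dPathPMF p e' es') ≤ u i :=
    hstart' ▸ dcdf_dPathPMF_le_of_admissible E p δ u d hp_supp hu_dest hu_adm
      e' es' hend' hchain' hedges'
  calc dcdf (dPathPMF p e (es ++ e' :: es')) T
      = dconv (dPathPMF p e es) (dcdf (dPathPMF p e' es')) T := by
        rw [dPathPMF_append, dcdf_dconv]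
    _ ≤ dconv (dPathPMF p e es) (u i) T := dconv_mono_right _ hcompletion T

/-- discrete time: The mixed reliability of a path prefix `P` from
`s` ending at node `i`, `r^P_{si}(T) = Σ_{t=0}^{T} q^P_{si}(t) u_i(T−t)`,
upper-bounds the reliability of every completion of `P` to the destination: for
any path `P'` from `i` to `d`,  `Σ_{t=0}^{T} q^{P∥P'}_{sd}(t) ≤ r^P_{si}(T)`. -/
theorem mixed_reliability_bounds_all_completions
    {V : Type*} [Fintype V] [DecidableEq V]
    (E : V → V → Prop)
    (p : V → V → ℕ → ℝ≥0) (δ : V → V → ℕ)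
    (u : V → ℕ → ℝ≥0)
    (s i d : V) (T : ℕ)
    (hδ_one : ∀ a b, 1 ≤ δ a b)
    (hp_supp : ∀ a b τ, τ < δ a b → p a b τ = 0)
    (hu_dest : ∀ t, u d t = 1)
    (hu_adm : ∀ a b, E a b → ∀ t,
      (∑ τ ∈ Finset.Icc (δ a b) t, p a b τ * u b (t - τ)) ≤ u a t)
    -- the prefix path `P = e :: es` runs from `s` to `i`
    (e : V × V) (es : List (V × V))
    (hstart : e.1 = s)
    (hmid : ((e :: es).getLast (List.cons_ne_nil e es)).2 = i)
    (hchain : List.Chain' (fun a b => a.2 = b.1) (e :: es))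
    (hedges : ∀ x ∈ e :: es, E x.1 x.2)
    -- the completion `P' = e' :: es'` runs from `i` to `d`
    (e' : V × V) (es' : List (V × V))
    (hstart' : e'.1 = i)
    (hend' : ((e' :: es').getLast (List.cons_ne_nil e' es')).2 = d)
    (hchain' : List.Chain' (fun a b => a.2 = b.1) (e' :: es'))
    (hedges' : ∀ x ∈ e' :: es', E x.1 x.2) :
    (∑ t ∈ Finset.range (T + 1), dPathPMF p e (es ++ e' :: es') t) ≤
      ∑ t ∈ Finset.range (T + 1), dPathPMF p e es t * u i (T - t) :=
  mixed_reliability_bounds_all_completions_general E p δ u i d T hp_supp hu_dest hu_adm e es e' es'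
    hstart' hend' hchain' hedges'
end

section
/- For generalized Arc-Potentials storing activation intervals, pruning is exact in the limit: if for edge (i,j) the stored set S_{ij} ⊆ ℕ contains every budget t at which (i,j) lies on an optimal policy to some d ∈ D, then pruning all edges with T ∉ S_{ij} ∪ [φ̄_{ij}, ∞) (where φ̄_{ij} bounds the next activation) preserves the optimal policy value u_s(T) for all s, all d ∈ D, and all T covered by the stored intervals. -/
open Finset
open scoped NNReal

/-- Edge `(i,j)` is active at budget `t` (for the query source `s`): it is
realizable under the optimal policy `w` toward the destination region when
starting from `s` with budget `t`. -/
def EdgeActive {V : Type*} (p : V → V → ℕ → ℝ≥0) (w : V → ℕ → V)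
    (s : V) (t : ℕ) (i j : V) : Prop :=
  ∃ t' : ℕ, Relation.ReflTransGen (PolicyStep p w) (s, t) (i, t') ∧ w i t' = j

/-!
Pruning only removes edges, so by strong induction on the budget the pruned value never exceeds
the full one. Conversely, every state reached from `(s, T)` under the optimal policy `w` uses an
edge that is active at `T`, hence kept; following `w` inside the pruned graph then shows, again by
strong induction on the budget, that the pruned value is at least `u` on all such states.
Both inductions go through because every edge consumes at least one unit of budget.
-/

section Bellman

variable {V : Type*} (p : V → V → ℕ → ℝ≥0) (δ : V → V → ℕ)

def continuationValue (u : V → ℕ → ℝ≥0) (i j : V) (t : ℕ) : ℝ≥0 :=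
  ∑ τ ∈ Icc (δ i j) t, p i j τ * u j (t - τ)

def IsBellmanValue (N : V → Finset V) (D : Finset V) (u : V → ℕ → ℝ≥0) : Prop :=
  (∀ d ∈ D, ∀ t, u d t = 1) ∧ ∀ i ∉ D, ∀ t, u i t = (N i).sup (continuationValue p δ u i · t)

variable {p δ}

theorem continuationValue_le_continuationValue {u v : V → ℕ → ℝ≥0} {i j : V} {t : ℕ}
    (h : ∀ τ ∈ Icc (δ i j) t, 0 < p i j τ → u j (t - τ) ≤ v j (t - τ)) :
    continuationValue p δ u i j t ≤ continuationValue p δ v i j t := by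
  refine sum_le_sum fun τ hτ => ?_
  rcases eq_zero_or_pos (p i j τ) with hp | hp
  · simp [hp]
  · exact mul_le_mul_right (h τ hτ hp) _

theorem sub_lt_of_mem_Icc_delay (hδ : ∀ i j, 1 ≤ δ i j) {i j : V} {t τ : ℕ}
    (hτ : τ ∈ Icc (δ i j) t) : t - τ < t := by
  have := hδ i j
  have := mem_Icc.1 hτ
  omega

theorem policyStep_of_mem_Icc_delay {w : V → ℕ → V} (hδ : ∀ i j, 1 ≤ δ i j) {i : V} {t τ : ℕ}
    (hτ : τ ∈ Icc (δ i (w i t)) t) (hp : 0 < p i (w i t) τ) :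
    PolicyStep p w (i, t) (w i t, t - τ) :=
  ⟨rfl, sub_lt_of_mem_Icc_delay hδ hτ, by simpa [Nat.sub_sub_self (mem_Icc.1 hτ).2] using hp⟩

theorem IsBellmanValue.le_of_subset (hδ : ∀ i j, 1 ≤ δ i j) {N N' : V → Finset V}
    {D : Finset V} {u u' : V → ℕ → ℝ≥0} (hN : ∀ i, N' i ⊆ N i)
    (hu' : IsBellmanValue p δ N' D u') (hu : IsBellmanValue p δ N D u) (i : V) (t : ℕ) :
    u' i t ≤ u i t := by
  induction t using Nat.strong_induction_on generalizing i with
  | _ t ih =>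
    by_cases hiD : i ∈ D
    · rw [hu'.1 i hiD, hu.1 i hiD]
    rw [hu'.2 i hiD, hu.2 i hiD]
    refine Finset.sup_le fun j hj => le_trans ?_ (Finset.le_sup (hN i hj))
    exact continuationValue_le_continuationValue fun τ hτ _ =>
      ih _ (sub_lt_of_mem_Icc_delay hδ hτ) j

theorem le_isBellmanValue_of_reachable (hδ : ∀ i j, 1 ≤ δ i j) {N' : V → Finset V}
    {D : Finset V} {u u' : V → ℕ → ℝ≥0} {w : V → ℕ → V} {s : V} {T : ℕ}
    (hu_dest : ∀ d ∈ D, ∀ t, u d t = 1)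
    (hw_opt : ∀ i ∉ D, ∀ t, u i t = continuationValue p δ u i (w i t) t)
    (hu' : IsBellmanValue p δ N' D u')
    (hkeep : ∀ i t, Relation.ReflTransGen (PolicyStep p w) (s, T) (i, t) → i ∉ D → w i t ∈ N' i)
    (i : V) (t : ℕ) (hreach : Relation.ReflTransGen (PolicyStep p w) (s, T) (i, t)) :
    u i t ≤ u' i t := by
  induction t using Nat.strong_induction_on generalizing i with
  | _ t ih =>
    by_cases hiD : i ∈ D
    · rw [hu'.1 i hiD, hu_dest i hiD]
    rw [hw_opt i hiD t, hu'.2 i hiD]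
    refine le_trans ?_ (Finset.le_sup (hkeep i t hreach hiD))
    exact continuationValue_le_continuationValue fun τ hτ hp =>
      ih _ (sub_lt_of_mem_Icc_delay hδ hτ) _
        (hreach.tail (policyStep_of_mem_Icc_delay hδ hτ hp))

end Bellman

theorem generalized_arc_potential_pruning_sound_general
    {V : Type*}
    (neighbors : V → Finset V) (D : Finset V)
    (p : V → V → ℕ → ℝ≥0) (δ : V → V → ℕ)
    (u u' : V → ℕ → ℝ≥0) (w : V → ℕ → V)
    (S : V → V → Set ℕ) [∀ i j, DecidablePred (· ∈ S i j)]
    (φbar : V → V → ℕ)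
    (s : V) (T : ℕ)
    (hδ_one : ∀ i j, 1 ≤ δ i j)
    -- `u` is the Bellman value toward the region `D` on the full graph
    (hu_dest : ∀ d ∈ D, ∀ t, u d t = 1)
    (hu_rec : ∀ i, i ∉ D → ∀ t,
      u i t = (neighbors i).sup
        (fun j => ∑ τ ∈ Finset.Icc (δ i j) t, p i j τ * u j (t - τ)))
    -- `w` is an optimal policy attaining `u`
    (hw_mem : ∀ i, i ∉ D → ∀ t, w i t ∈ neighbors i)
    (hw_opt : ∀ i, i ∉ D → ∀ t,
      u i t = ∑ τ ∈ Finset.Icc (δ i (w i t)) t, p i (w i t) τ * u (w i t) (t - τ))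
    -- the stored intervals contain every active budget below the bound `φ̄`
    (hS : ∀ i j t, EdgeActive p w s t i j → t ∈ S i j ∨ φbar i j ≤ t)
    -- `u'` is the Bellman value on the graph pruned for budget `T`
    (hu'_dest : ∀ d ∈ D, ∀ t, u' d t = 1)
    (hu'_rec : ∀ i, i ∉ D → ∀ t,
      u' i t = ((neighbors i).filter (fun j => T ∈ S i j ∨ φbar i j ≤ T)).sup
        (fun j => ∑ τ ∈ Finset.Icc (δ i j) t, p i j τ * u' j (t - τ))) :
    u' s T = u s T := by
  have hu : IsBellmanValue p δ neighbors D u := ⟨hu_dest, hu_rec⟩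
  have hu' : IsBellmanValue p δ
      (fun i => (neighbors i).filter (fun j => T ∈ S i j ∨ φbar i j ≤ T)) D u' :=
    ⟨hu'_dest, hu'_rec⟩
  have hkeep : ∀ i t, Relation.ReflTransGen (PolicyStep p w) (s, T) (i, t) → i ∉ D →
      w i t ∈ (neighbors i).filter (fun j => T ∈ S i j ∨ φbar i j ≤ T) :=
    fun i t hreach hiD => mem_filter.2 ⟨hw_mem i hiD t, hS i _ T ⟨t, hreach, rfl⟩⟩
  exact le_antisymm (hu'.le_of_subset hδ_one (fun _ => filter_subset _ _) hu s T)
    (le_isBellmanValue_of_reachable hδ_one hu_dest hw_opt hu' hkeep s T .refl)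

/-- Exactness-in-the-limit of generalized Arc-Potential pruning.
Suppose for each edge `(i,j)` the stored set `S_{ij} ⊆ ℕ` together with the
next-activation lower bound `φ̄_{ij}` covers every active budget
(`EdgeActive → t ∈ S_{ij} ∨ φ̄_{ij} ≤ t`).  Prune, for query budget `T`, every edge
with `T ∉ S_{ij}` and `T < φ̄_{ij}`.  Then the Bellman value toward the destination
region `D` is preserved: `u'_s(T) = u_s(T)`. -/
theorem generalized_arc_potential_pruning_sound
    {V : Type*} [Fintype V] [DecidableEq V]
    (neighbors : V → Finset V) (D : Finset V)
    (p : V → V → ℕ → ℝ≥0) (δ : V → V → ℕ)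
    (u u' : V → ℕ → ℝ≥0) (w : V → ℕ → V)
    (S : V → V → Set ℕ) [∀ i j, DecidablePred (· ∈ S i j)]
    (φbar : V → V → ℕ)
    (s : V) (T : ℕ)
    (hp_mass : ∀ i j n, ∑ τ ∈ Finset.range n, p i j τ ≤ 1)
    (hδ_one : ∀ i j, 1 ≤ δ i j)
    (hp_supp : ∀ i j τ, τ < δ i j → p i j τ = 0)
    -- `u` is the Bellman value toward the region `D` on the full graph
    (hu_dest : ∀ d ∈ D, ∀ t, u d t = 1)
    (hu_rec : ∀ i, i ∉ D → ∀ t,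
      u i t = (neighbors i).sup
        (fun j => ∑ τ ∈ Finset.Icc (δ i j) t, p i j τ * u j (t - τ)))
    -- `w` is an optimal policy attaining `u`
    (hw_mem : ∀ i, i ∉ D → ∀ t, w i t ∈ neighbors i)
    (hw_opt : ∀ i, i ∉ D → ∀ t,
      u i t = ∑ τ ∈ Finset.Icc (δ i (w i t)) t, p i (w i t) τ * u (w i t) (t - τ))
    -- the stored intervals contain every active budget below the bound `φ̄`
    (hS : ∀ i j t, EdgeActive p w s t i j → t ∈ S i j ∨ φbar i j ≤ t)
    -- `u'` is the Bellman value on the graph pruned for budget `T`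
    (hu'_dest : ∀ d ∈ D, ∀ t, u' d t = 1)
    (hu'_rec : ∀ i, i ∉ D → ∀ t,
      u' i t = ((neighbors i).filter (fun j => T ∈ S i j ∨ φbar i j ≤ T)).sup
        (fun j => ∑ τ ∈ Finset.Icc (δ i j) t, p i j τ * u' j (t - τ))) :
    u' s T = u s T :=
  generalized_arc_potential_pruning_sound_general neighbors D p δ u u' w S φbar s T hδ_one hu_dest
    hu_rec hw_mem hw_opt hS hu'_dest hu'_rec
end
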